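/- The δ₂ rearrangement distance between spectra is controlled by the Frobenius norm: for two symmetric matrices A, B ∈ R^{n×n} with eigenvalue sequences λ(A), λ(B), one has δ₂(λ(A), λ(B)) ≤ ‖A − B‖_F (Hoffman–Wielandt inequality), where δ₂²(x, y) = inf_{π permutation} Σ_i (x_i − y_{π(i)})². -/
import Mathlib

open Matrix Finset

/-- The sum of squared entries equals the trace of `star N * N`. -/
lemma hw_frob_sum_eq_trace {n : ℕ} (N : Matrix (Fin n) (Fin n) ℝ) :
    ∑ i, ∑ j, (N i j)^2 = Matrix.trace (star N * N) := by
  simp [Matrix.trace, Matrix.mul_apply, Matrix.diag, sq, Matrix.star_eq_conjTranspose,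
    Matrix.conjTranspose_apply]
  rw [Finset.sum_comm]

/-- Frobenius sum is invariant under left/right multiplication by unitaries. -/
lemma hw_frob_inv {n : ℕ} (U V : Matrix.unitaryGroup (Fin n) ℝ)
    (M : Matrix (Fin n) (Fin n) ℝ) :
    ∑ i, ∑ j, ((star U.1 * M * V.1) i j)^2 = ∑ i, ∑ j, (M i j)^2 := by
  rw [hw_frob_sum_eq_trace, hw_frob_sum_eq_trace]
  have hU : U.1 * star U.1 = 1 := Unitary.mul_star_self_of_mem U.2
  have hV : V.1 * star V.1 = 1 := Unitary.mul_star_self_of_mem V.2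
  have : star (star U.1 * M * V.1) * (star U.1 * M * V.1)
      = star V.1 * (star M * M) * V.1 := by
    simp only [StarMul.star_mul, star_star, Matrix.mul_assoc]
    rw [← Matrix.mul_assoc U.1 (star U.1), hU, Matrix.one_mul]
  rw [this, Matrix.trace_mul_cycle, ← Matrix.mul_assoc, hV, Matrix.one_mul]

/-- The entrywise squares of a real unitary matrix form a doubly stochastic matrix. -/
lemma hw_sq_doublyStochastic {n : ℕ} (W : Matrix.unitaryGroup (Fin n) ℝ) :
    Matrix.of (fun i j => (W.1 i j)^2) ∈ doublyStochastic ℝ (Fin n) := by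
  rw [mem_doublyStochastic_iff_sum]
  refine ⟨fun i j => sq_nonneg _, fun i => ?_, fun j => ?_⟩
  · have h : W.1 * star W.1 = 1 := Unitary.mul_star_self_of_mem W.2
    have := congrFun (congrFun h i) i
    simpa [Matrix.mul_apply, Matrix.one_apply, sq, Matrix.star_eq_conjTranspose,
      Matrix.conjTranspose_apply] using this
  · have h : star W.1 * W.1 = 1 := Unitary.star_mul_self_of_mem W.2
    have := congrFun (congrFun h j) j
    simpa [Matrix.mul_apply, Matrix.one_apply, sq, Matrix.star_eq_conjTranspose,
      Matrix.conjTranspose_apply] using this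

/-- Consequence of Birkhoff–von Neumann: a linear functional on a doubly stochastic matrix
dominates its value at some permutation matrix. -/
lemma hw_birkhoff_min {n : ℕ} (c : Fin n → Fin n → ℝ) {S : Matrix (Fin n) (Fin n) ℝ}
    (hS : S ∈ doublyStochastic ℝ (Fin n)) :
    ∃ σ : Equiv.Perm (Fin n), ∑ i, c i (σ i) ≤ ∑ i, ∑ j, c i j * S i j := by
  set f : Matrix (Fin n) (Fin n) ℝ →ₗ[ℝ] ℝ :=
    { toFun := fun X => ∑ i, ∑ j, c i j * X i j
      map_add' := by intros; simp [mul_add, Finset.sum_add_distrib]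
      map_smul' := by intros; simp [Finset.mul_sum, mul_left_comm] } with hf
  have hfperm : ∀ σ : Equiv.Perm (Fin n), f (σ.permMatrix ℝ) = ∑ i, c i (σ i) := by
    intro σ
    simp [hf, Equiv.Perm.permMatrix, PEquiv.toMatrix_apply, Equiv.toPEquiv, mul_ite]
  have hmem : f S ∈ convexHull ℝ (f '' {σ.permMatrix ℝ | σ : Equiv.Perm (Fin n)}) := by
    rw [← f.image_convexHull, ← doublyStochastic_eq_convexHull_permMatrix]
    exact Set.mem_image_of_mem f hS
  have hne : (Finset.univ : Finset (Equiv.Perm (Fin n))).Nonempty := Finset.univ_nonempty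
  set m := Finset.univ.inf' hne (fun σ : Equiv.Perm (Fin n) => f (σ.permMatrix ℝ)) with hm
  have hsub : convexHull ℝ (f '' {σ.permMatrix ℝ | σ : Equiv.Perm (Fin n)}) ⊆ Set.Ici m := by
    apply convexHull_min _ (convex_Ici m)
    rintro x ⟨X, ⟨σ, rfl⟩, rfl⟩
    exact Finset.inf'_le (fun σ : Equiv.Perm (Fin n) => f (σ.permMatrix ℝ)) (Finset.mem_univ σ)
  obtain ⟨σ, -, hσ⟩ :=
    Finset.exists_mem_eq_inf' hne (fun σ : Equiv.Perm (Fin n) => f (σ.permMatrix ℝ))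
  refine ⟨σ, ?_⟩
  have h1 : m ≤ f S := hsub hmem
  rw [hm, hσ, hfperm] at h1
  simpa [hf] using h1

/-- The Frobenius norm of a real matrix. -/
noncomputable def frobNorm {n : ℕ} (M : Matrix (Fin n) (Fin n) ℝ) : ℝ :=
  Real.sqrt (∑ i, ∑ j, (M i j) ^ 2)

/-- Hoffman–Wielandt inequality: the `ℓ₂` rearrangement distance between the spectra of two
symmetric matrices is bounded by the Frobenius norm of their difference, i.e. there is a
matching of eigenvalues with `√(∑ᵢ (λ_i(A) − λ_{π(i)}(B))²) ≤ ‖A − B‖_F`. -/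
theorem hoffman_wielandt (n : ℕ) (A B : Matrix (Fin n) (Fin n) ℝ)
    (hA : A.IsHermitian) (hB : B.IsHermitian) :
    ∃ σ : Equiv.Perm (Fin n),
      Real.sqrt (∑ i, (hA.eigenvalues i - hB.eigenvalues (σ i)) ^ 2) ≤
        frobNorm (A - B) := by
  set U := hA.eigenvectorUnitary with hUdef
  set V := hB.eigenvectorUnitary with hVdef
  have hAspec : A = U.1 * Matrix.diagonal hA.eigenvalues * star U.1 := by
    simpa [RCLike.ofReal_real_eq_id] using hA.spectral_theorem
  have hBspec : B = V.1 * Matrix.diagonal hB.eigenvalues * star V.1 := by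
    simpa [RCLike.ofReal_real_eq_id] using hB.spectral_theorem
  set W : Matrix (Fin n) (Fin n) ℝ := star U.1 * V.1 with hWdef
  set Wg : Matrix.unitaryGroup (Fin n) ℝ := star U * V with hWg
  have hWcoe : Wg.1 = W := by
    simp [hWg, hWdef]
  have hUU : star U.1 * U.1 = 1 := Unitary.star_mul_self_of_mem U.2
  have hVV : star V.1 * V.1 = 1 := Unitary.star_mul_self_of_mem V.2
  -- key identity
  have key : star U.1 * (A - B) * V.1
      = Matrix.diagonal hA.eigenvalues * W - W * Matrix.diagonal hB.eigenvalues := by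
    rw [Matrix.mul_sub, Matrix.sub_mul]
    congr 1
    · conv_lhs => rw [hAspec]
      calc star U.1 * (U.1 * Matrix.diagonal hA.eigenvalues * star U.1) * V.1
          = (star U.1 * U.1) * Matrix.diagonal hA.eigenvalues * (star U.1 * V.1) := by
            simp only [Matrix.mul_assoc]
        _ = Matrix.diagonal hA.eigenvalues * W := by
            rw [hUU, Matrix.one_mul]
    · conv_lhs => rw [hBspec]
      calc star U.1 * (V.1 * Matrix.diagonal hB.eigenvalues * star V.1) * V.1
          = (star U.1 * V.1) * (Matrix.diagonal hB.eigenvalues * (star V.1 * V.1)) := by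
            simp only [Matrix.mul_assoc]
        _ = W * Matrix.diagonal hB.eigenvalues := by
            rw [hVV, Matrix.mul_one]
  -- entrywise form
  have entry : ∀ i j, (star U.1 * (A - B) * V.1) i j
      = (hA.eigenvalues i - hB.eigenvalues j) * W i j := by
    intro i j
    rw [key]
    simp only [Matrix.sub_apply, Matrix.diagonal_mul, Matrix.mul_diagonal]
    ring
  -- Frobenius sum equals weighted sum against squared unitary entries
  have hsum : ∑ i, ∑ j, ((A - B) i j)^2
      = ∑ i, ∑ j, (hA.eigenvalues i - hB.eigenvalues j)^2 * (W i j)^2 := by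
    rw [← hw_frob_inv U V (A - B)]
    refine Finset.sum_congr rfl fun i _ => Finset.sum_congr rfl fun j _ => ?_
    rw [entry i j, mul_pow]
  -- Birkhoff step
  obtain ⟨σ, hσ⟩ := hw_birkhoff_min (fun i j => (hA.eigenvalues i - hB.eigenvalues j)^2)
    (hw_sq_doublyStochastic Wg)
  refine ⟨σ, ?_⟩
  apply Real.sqrt_le_sqrt
  calc ∑ i, (hA.eigenvalues i - hB.eigenvalues (σ i)) ^ 2
      ≤ ∑ i, ∑ j, (hA.eigenvalues i - hB.eigenvalues j)^2
          * (Matrix.of (fun i j => (Wg.1 i j)^2) i j) := hσ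
    _ = ∑ i, ∑ j, ((A - B) i j)^2 := by
        rw [hsum]
        refine Finset.sum_congr rfl fun i _ => Finset.sum_congr rfl fun j _ => ?_
        rw [hWcoe]
        rfl
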